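/- For all integers n ≥ 2, a with 0 ≤ a ≤ n−1, and s with 1 ≤ s ≤ n: (s/n)·λ_{n−1,a,s−1} + (1 − s/n)·λ_{n−1,a,s} = λ_{n,a,s}, and −(s/n)·λ_{n−1,a,s−1} + (1 − s/n)·λ_{n−1,a,s} = λ_{n,a+1,s}. -/
import Mathlib

open Finset

/-- `λ_{n,a,s} = ∑_{t=0}^{a} C(a,t) (−2)^t (s)_t/(n)_t`. -/
noncomputable def lam (n a s : ℕ) : ℝ :=
  ∑ t ∈ Finset.range (a + 1),
    (a.choose t : ℝ) * (-2 : ℝ) ^ t * (s.descFactorial t : ℝ) / (n.descFactorial t : ℝ)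

lemma desc_ne_zero {m t : ℕ} (h : t ≤ m) : ((m.descFactorial t : ℕ) : ℝ) ≠ 0 := by
  exact_mod_cast fun hz => absurd (Nat.descFactorial_eq_zero_iff_lt.mp (by exact_mod_cast hz)) (not_lt.mpr h)

lemma term1 (n s t : ℕ) (c : ℝ) (hn : 2 ≤ n) (ht : t ≤ n - 1) (hs1 : 1 ≤ s) (hsn : s ≤ n) :
    ((s : ℝ) / n) * (c * ((s-1).descFactorial t : ℕ) / (((n-1).descFactorial t : ℕ) : ℝ))
      + (1 - (s : ℝ) / n) * (c * ((s.descFactorial t : ℕ) : ℝ) / (((n-1).descFactorial t : ℕ) : ℝ))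
      = c * ((s.descFactorial t : ℕ) : ℝ) / ((n.descFactorial t : ℕ) : ℝ) := by
  have htn : t ≤ n := le_trans ht (Nat.sub_le _ _)
  have hC : (((n-1).descFactorial t : ℕ) : ℝ) ≠ 0 := desc_ne_zero ht
  have hD : ((n.descFactorial t : ℕ) : ℝ) ≠ 0 := desc_ne_zero htn
  have hn0 : (n : ℝ) ≠ 0 := by positivity
  -- key identities
  have key1 : (n : ℝ) * ((n-1).descFactorial t : ℕ) = ((n - t : ℕ) : ℝ) * (n.descFactorial t : ℕ) := by
    have h1 : n.descFactorial (t+1) = (n - t) * n.descFactorial t := Nat.descFactorial_succ n t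
    have h2 : n.descFactorial (t+1) = n * (n-1).descFactorial t := by
      conv_lhs => rw [show n = (n-1)+1 by omega]
      rw [Nat.succ_descFactorial_succ]
      congr 1
      omega
    exact_mod_cast h2 ▸ h1
  have key2 : (s : ℝ) * ((s-1).descFactorial t : ℕ) = ((s - t : ℕ) : ℝ) * (s.descFactorial t : ℕ) := by
    have h1 : s.descFactorial (t+1) = (s - t) * s.descFactorial t := Nat.descFactorial_succ s t
    have h2 : s.descFactorial (t+1) = s * (s-1).descFactorial t := by
      conv_lhs => rw [show s = (s-1)+1 by omega]
      rw [Nat.succ_descFactorial_succ]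
      congr 1
      omega
    exact_mod_cast h2 ▸ h1
  rcases le_or_gt t s with hts | hts
  · rw [Nat.cast_sub hts] at key2
    rw [Nat.cast_sub htn] at key1
    field_simp
    linear_combination (c * ((n.descFactorial t : ℕ) : ℝ)) * key2 - (c * ((s.descFactorial t : ℕ) : ℝ)) * key1
  · have hA : ((s-1).descFactorial t : ℕ) = 0 := Nat.descFactorial_eq_zero_iff_lt.mpr (by omega)
    have hB : (s.descFactorial t : ℕ) = 0 := Nat.descFactorial_eq_zero_iff_lt.mpr hts
    rw [hA, hB]
    simp

/-- The one-step eigenvalue recursions: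
`(s/n)·λ_{n−1,a,s−1} + (1 − s/n)·λ_{n−1,a,s} = λ_{n,a,s}` and
`−(s/n)·λ_{n−1,a,s−1} + (1 − s/n)·λ_{n−1,a,s} = λ_{n,a+1,s}`. -/
theorem lam_recursion (n a s : ℕ) (hn : 2 ≤ n) (ha : a ≤ n - 1)
    (hs1 : 1 ≤ s) (hsn : s ≤ n) :
    ((s : ℝ) / n) * lam (n - 1) a (s - 1) + (1 - (s : ℝ) / n) * lam (n - 1) a s
        = lam n a s ∧
    -((s : ℝ) / n) * lam (n - 1) a (s - 1) + (1 - (s : ℝ) / n) * lam (n - 1) a s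
        = lam n (a + 1) s := by
  have h1 : ((s : ℝ) / n) * lam (n - 1) a (s - 1) + (1 - (s : ℝ) / n) * lam (n - 1) a s
      = lam n a s := by
    unfold lam
    rw [Finset.mul_sum, Finset.mul_sum, ← Finset.sum_add_distrib]
    refine Finset.sum_congr rfl fun t ht => ?_
    have ht' : t ≤ n - 1 := le_trans (Nat.lt_succ_iff.mp (Finset.mem_range.mp ht)) ha
    have := term1 n s t ((a.choose t : ℝ) * (-2 : ℝ) ^ t) hn ht' hs1 hsn
    linear_combination this
  refine ⟨h1, ?_⟩
  have e1 : lam n (a+1) s =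
      (∑ t ∈ Finset.range (a+1),
        (a.choose (t+1) : ℝ) * (-2 : ℝ) ^ (t+1) * (s.descFactorial (t+1) : ℝ)
          / (n.descFactorial (t+1) : ℝ))
      + (∑ t ∈ Finset.range (a+1),
        (a.choose t : ℝ) * (-2 : ℝ) ^ (t+1) * (s.descFactorial (t+1) : ℝ)
          / (n.descFactorial (t+1) : ℝ)) + 1 := by
    unfold lam
    rw [Finset.sum_range_succ' _ (a+1)]
    have hF0 : (((a+1).choose 0 : ℕ) : ℝ) * (-2 : ℝ) ^ 0 * (s.descFactorial 0 : ℕ)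
        / ((n.descFactorial 0 : ℕ) : ℝ) = 1 := by simp
    rw [hF0, ← Finset.sum_add_distrib]
    congr 1
    refine Finset.sum_congr rfl fun t ht => ?_
    have hch : ((a+1).choose (t+1) : ℕ) = a.choose t + a.choose (t+1) :=
      Nat.choose_succ_succ a t
    rw [hch]
    push_cast
    ring
  have e2 : lam n a s =
      (∑ t ∈ Finset.range (a+1),
        (a.choose (t+1) : ℝ) * (-2 : ℝ) ^ (t+1) * (s.descFactorial (t+1) : ℝ)
          / (n.descFactorial (t+1) : ℝ)) + 1 := by
    unfold lam
    rw [Finset.sum_range_succ' _ a, Finset.sum_range_succ]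
    have hz : (a.choose (a+1) : ℕ) = 0 := Nat.choose_eq_zero_of_lt (Nat.lt_succ_self a)
    rw [hz]
    simp
  have e3 : (∑ t ∈ Finset.range (a+1),
        (a.choose t : ℝ) * (-2 : ℝ) ^ (t+1) * (s.descFactorial (t+1) : ℝ)
          / (n.descFactorial (t+1) : ℝ))
      = (-2) * ((s : ℝ) / n) * lam (n-1) a (s-1) := by
    unfold lam
    rw [Finset.mul_sum]
    refine Finset.sum_congr rfl fun t ht => ?_
    have ht' : t ≤ n - 1 := le_trans (Nat.lt_succ_iff.mp (Finset.mem_range.mp ht)) ha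
    have hC : (((n-1).descFactorial t : ℕ) : ℝ) ≠ 0 := desc_ne_zero ht'
    have hn0 : (n : ℝ) ≠ 0 := by positivity
    have h2 : s.descFactorial (t+1) = s * (s-1).descFactorial t := by
      conv_lhs => rw [show s = (s-1)+1 by omega]
      rw [Nat.succ_descFactorial_succ]
      congr 1
      omega
    have h3 : n.descFactorial (t+1) = n * (n-1).descFactorial t := by
      conv_lhs => rw [show n = (n-1)+1 by omega]
      rw [Nat.succ_descFactorial_succ]
      congr 1
      omega
    rw [h2, h3]
    push_cast
    field_simp
    ring
  linarith [h1, e1, e2, e3]
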